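/- arXiv:2404.06195 — 3 statements merged into one kernel-verified Lean document; each statement's English description precedes it below -/
import Mathlib

section
/- The set 𝔇₂ = {z ∈ ℂ² : |z₁z₂ − 1| ≤ 1/2, |z₁ + z₂ − 1| ≤ 4} is not simply connected. More precisely, the loop γ(θ) = (e^{iθ}, e^{−iθ}), θ ∈ [0, 2π], lies in 𝔇₂ and is not null-homotopic in 𝔇₂. -/
/-- The polynomial polyhedron `{z ∈ ℂ² : |z₁z₂ − 1| ≤ 1/2, |z₁ + z₂ − 1| ≤ 4}`. -/
def D2 : Set (ℂ × ℂ) := {z | ‖z.1 * z.2 - 1‖ ≤ 1 / 2 ∧ ‖z.1 + z.2 - 1‖ ≤ 4}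

noncomputable section

namespace Stmt2Aux

open Complex Set

/-- The unit square in `ℝ × ℝ`. -/
def K : Set (ℝ × ℝ) := Set.Icc (0:ℝ) 1 ×ˢ Set.Icc (0:ℝ) 1

lemma tele (F : ℕ → ℂ) (hF : ∀ k, F k ≠ 0) :
    ∀ M : ℕ, F 0 * ∏ k ∈ Finset.range M, (F (k + 1) / F k) = F M := by
  intro M
  induction M with
  | zero => simp
  | succ M ih =>
    rw [Finset.prod_range_succ, ← mul_assoc, ih, mul_comm, div_mul_cancel₀ _ (hF M)]

/-- Continuous logarithm of a nonvanishing continuous function on the unit square. -/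
lemma exists_lift (f : ℝ × ℝ → ℂ) (hf : Continuous f) (h0 : ∀ x, f x ≠ 0) :
    ∃ g : ℝ × ℝ → ℂ, ContinuousOn g K ∧ ∀ x ∈ K, Complex.exp (g x) = f x := by
  have hK : IsCompact K := isCompact_Icc.prod isCompact_Icc
  have hKne : K.Nonempty := ⟨(0, 0), ⟨by norm_num, by norm_num⟩⟩
  obtain ⟨x₀, hx₀K, hmin⟩ := hK.exists_isMinOn hKne (continuous_norm.comp hf).continuousOn
  set m := ‖f x₀‖ with hm
  have hx₀ : ∀ y ∈ K, m ≤ ‖f y‖ := fun y hy => isMinOn_iff.mp hmin y hy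
  have hmpos : 0 < m := norm_pos_iff.mpr (h0 x₀)
  obtain ⟨δ, hδpos, hδ⟩ := Metric.uniformContinuousOn_iff.mp
    (hK.uniformContinuousOn_of_continuous hf.continuousOn) m hmpos
  obtain ⟨n, hn⟩ := exists_nat_one_div_lt hδpos
  set N : ℕ := n + 1 with hN
  have hNpos : (0:ℝ) < N := by positivity
  -- the radial interpolation maps
  set ρ : ℕ → ℝ × ℝ → ℝ × ℝ := fun k x => (((k:ℝ)/N) * x.1, ((k:ℝ)/N) * x.2) with hρ
  have hρc : ∀ k, Continuous (ρ k) := by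
    intro k
    exact ((continuous_const.mul continuous_fst).prodMk (continuous_const.mul continuous_snd))
  have hρmem : ∀ k, k ≤ N → ∀ x ∈ K, ρ k x ∈ K := by
    intro k hk x hx
    have hfrac0 : (0:ℝ) ≤ (k:ℝ)/N := by positivity
    have hfrac1 : (k:ℝ)/N ≤ 1 := by
      rw [div_le_one hNpos]; exact_mod_cast hk
    obtain ⟨⟨h1, h2⟩, ⟨h3, h4⟩⟩ := hx
    refine ⟨⟨mul_nonneg hfrac0 h1, ?_⟩, mul_nonneg hfrac0 h3, ?_⟩
    · show (k:ℝ)/N * x.1 ≤ 1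
      nlinarith
    · show (k:ℝ)/N * x.2 ≤ 1
      nlinarith
  have hρ0 : ∀ x, ρ 0 x = (0, 0) := by intro x; simp [hρ]
  have hρN : ∀ x, ρ N x = x := by
    intro x
    simp only [hρ, div_self (ne_of_gt hNpos), one_mul]
  -- small steps
  have hclose : ∀ k, k < N → ∀ x ∈ K, dist (f (ρ (k+1) x)) (f (ρ k x)) < m := by
    intro k hk x hx
    apply hδ _ (hρmem (k+1) hk x hx) _ (hρmem k (le_of_lt hk) x hx)
    have key : ∀ a : ℝ, a ∈ Set.Icc (0:ℝ) 1 → dist (((k+1:ℕ):ℝ)/N * a) (((k:ℕ):ℝ)/N * a) < δ := by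
      intro a ha
      rw [Real.dist_eq]
      have he : ((k+1:ℕ):ℝ)/N * a - ((k:ℕ):ℝ)/N * a = a / N := by
        field_simp
        push_cast
        ring
      rw [he, _root_.abs_of_nonneg (div_nonneg ha.1 hNpos.le)]
      have h1N : a / N ≤ 1 / N := by gcongr; exact ha.2
      exact h1N.trans_lt (by calc (1:ℝ)/N = 1/((n:ℝ)+1) := by rw [hN]; push_cast; ring
        _ < δ := hn)
    rw [Prod.dist_eq]
    exact max_lt (key x.1 hx.1) (key x.2 hx.2)
  -- the multiplicative steps are close to 1
  set u : ℕ → ℝ × ℝ → ℂ := fun k x => f (ρ (k+1) x) / f (ρ k x) with hu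
  have hu0 : ∀ k x, u k x ≠ 0 := fun k x => div_ne_zero (h0 _) (h0 _)
  have hu1 : ∀ k, k < N → ∀ x ∈ K, ‖u k x - 1‖ < 1 := by
    intro k hk x hx
    have hne : f (ρ k x) ≠ 0 := h0 _
    rw [hu]
    simp only
    rw [div_sub_one hne, norm_div, div_lt_one (norm_pos_iff.mpr hne)]
    have h1 : ‖f (ρ (k+1) x) - f (ρ k x)‖ < m := by
      rw [← dist_eq_norm]; exact hclose k hk x hx
    have h2 : m ≤ ‖f (ρ k x)‖ := hx₀ _ (hρmem k (le_of_lt hk) x hx)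
    linarith
  have hslit : ∀ k, k < N → ∀ x ∈ K, u k x ∈ Complex.slitPlane := by
    intro k hk x hx
    have := Complex.mem_slitPlane_of_norm_lt_one (hu1 k hk x hx)
    have he : (1:ℂ) + (u k x - 1) = u k x := by ring
    rwa [he] at this
  -- the lift
  refine ⟨fun x => Complex.log (f (0, 0)) + ∑ k ∈ Finset.range N, Complex.log (u k x), ?_, ?_⟩
  · apply ContinuousOn.add continuousOn_const
    apply continuousOn_finset_sum
    intro k hk x hx
    apply ContinuousWithinAt.clog
    · exact (((hf.comp (hρc (k+1))).div (hf.comp (hρc k)) (fun y => h0 _))).continuousWithinAt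
    · exact hslit k (Finset.mem_range.mp hk) x hx
  · intro x hx
    rw [Complex.exp_add, Complex.exp_sum, Complex.exp_log (h0 (0, 0))]
    have hprod : ∏ k ∈ Finset.range N, Complex.exp (Complex.log (u k x)) =
        ∏ k ∈ Finset.range N, (f (ρ (k+1) x) / f (ρ k x)) := by
      apply Finset.prod_congr rfl
      intro k _
      rw [Complex.exp_log (hu0 k x)]
    rw [hprod]
    have := tele (fun k => f (ρ k x)) (fun k => h0 _) N
    rw [hρ0, hρN] at this
    exact this

/-- A continuous function whose exponential is constantly `1` is constant on a
preconnected space. -/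
lemma const_of_exp_eq_one {X : Type*} [TopologicalSpace X] [PreconnectedSpace X]
    {u : X → ℂ} (hu : Continuous u) (h : ∀ x, Complex.exp (u x) = 1) (a b : X) : u a = u b := by
  have hlc : IsLocallyConstant u := by
    rw [IsLocallyConstant.iff_eventually_eq]
    intro x
    have hball : ∀ᶠ y in nhds x, u y ∈ Metric.ball (u x) (2 * Real.pi) :=
      (hu.tendsto x).eventually (Metric.ball_mem_nhds _ (by positivity))
    filter_upwards [hball] with y hy
    obtain ⟨p, hp⟩ := Complex.exp_eq_one_iff.mp (h y)
    obtain ⟨q, hq⟩ := Complex.exp_eq_one_iff.mp (h x)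
    have hpq : p = q := by
      by_contra hne
      have h1 : (1:ℝ) ≤ |((p - q : ℤ) : ℝ)| := by
        exact_mod_cast Int.one_le_abs (sub_ne_zero.mpr hne)
      have h2 := Metric.mem_ball.mp hy
      rw [Complex.dist_eq, hp, hq] at h2
      have heq : (p:ℂ) * (2 * Real.pi * I) - (q:ℂ) * (2 * Real.pi * I)
          = (((p - q : ℤ):ℝ):ℂ) * ((2 * Real.pi : ℝ):ℂ) * I := by push_cast; ring
      rw [heq] at h2
      have habs : ‖((((p - q : ℤ):ℝ):ℂ) * ((2 * Real.pi : ℝ):ℂ) * I)‖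
          = |((p - q : ℤ):ℝ)| * (2 * Real.pi) := by
        rw [norm_mul, norm_mul, Complex.norm_I, Complex.norm_real, Complex.norm_real, Real.norm_eq_abs, Real.norm_eq_abs,
          abs_of_pos (by positivity : (0:ℝ) < 2 * Real.pi)]
        ring
      rw [habs] at h2
      nlinarith [Real.pi_pos]
    rw [hp, hq, hpq]
  exact hlc.apply_eq_of_preconnectedSpace a b

lemma fst_ne_zero {z : ℂ × ℂ} (hz : z ∈ D2) : z.1 ≠ 0 := by
  intro h
  have h1 := hz.1
  rw [h, zero_mul, zero_sub, norm_neg, norm_one] at h1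
  norm_num at h1

lemma mem_loop (θ : ℝ) :
    ((Complex.exp (θ * Complex.I), Complex.exp (-θ * Complex.I)) : ℂ × ℂ) ∈ D2 := by
  constructor
  · show ‖Complex.exp ((θ:ℂ) * I) * Complex.exp (-(θ:ℂ) * I) - 1‖ ≤ 1 / 2
    have h1 : (θ:ℂ) * I + -(θ:ℂ) * I = 0 := by ring
    rw [← Complex.exp_add, h1, Complex.exp_zero, sub_self, norm_zero]
    norm_num
  · show ‖Complex.exp ((θ:ℂ) * I) + Complex.exp (-(θ:ℂ) * I) - 1‖ ≤ 4
    have e1 : ‖Complex.exp ((θ:ℂ) * I)‖ = 1 := by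
      exact Complex.norm_exp_ofReal_mul_I θ
    have e2 : ‖Complex.exp (-(θ:ℂ) * I)‖ = 1 := by
      rw [show -(θ:ℂ) * I = ((-θ : ℝ):ℂ) * I by push_cast; ring]
      exact Complex.norm_exp_ofReal_mul_I (-θ)
    calc ‖Complex.exp ((θ:ℂ) * I) + Complex.exp (-(θ:ℂ) * I) - 1‖
        ≤ ‖Complex.exp ((θ:ℂ) * I) + Complex.exp (-(θ:ℂ) * I)‖ + ‖(1:ℂ)‖ := norm_sub_le _ _
      _ ≤ ‖Complex.exp ((θ:ℂ) * I)‖ + ‖Complex.exp (-(θ:ℂ) * I)‖ + ‖(1:ℂ)‖ := by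
          gcongr
          exact norm_add_le _ _
      _ ≤ 4 := by rw [e1, e2, norm_one]; norm_num

lemma part2 (h : (((1 : ℂ), (1 : ℂ)) : ℂ × ℂ) ∈ D2)
    (γ : Path (⟨((1 : ℂ), (1 : ℂ)), h⟩ : D2) (⟨((1 : ℂ), (1 : ℂ)), h⟩ : D2))
    (hγ : ∀ t : unitInterval, (γ t : ℂ × ℂ) =
      (Complex.exp (((2 * Real.pi * (t : ℝ) : ℝ) : ℂ) * Complex.I),
       Complex.exp (-((2 * Real.pi * (t : ℝ) : ℝ) : ℂ) * Complex.I))) :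
    ¬ γ.Homotopic (Path.refl _) := by
  rintro ⟨H⟩
  set pI : ℝ → unitInterval := Set.projIcc (0:ℝ) 1 zero_le_one with hpI
  set F : ℝ × ℝ → ℂ := fun p => ((H (pI p.1, pI p.2) : D2) : ℂ × ℂ).1 with hF
  have hFc : Continuous F := by
    apply continuous_fst.comp
    apply continuous_subtype_val.comp
    exact H.continuous.comp
      ((continuous_projIcc.comp continuous_fst).prodMk (continuous_projIcc.comp continuous_snd))
  have hF0 : ∀ p, F p ≠ 0 := fun p => fst_ne_zero (H (pI p.1, pI p.2)).2
  obtain ⟨g, hgc, hge⟩ := exists_lift F hFc hF0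
  have hmemK : ∀ a b : unitInterval, (((a:ℝ), (b:ℝ)) : ℝ × ℝ) ∈ K := fun a b => ⟨a.2, b.2⟩
  have hFst : ∀ a b : unitInterval, F ((a:ℝ), (b:ℝ)) = ((H (a, b) : D2) : ℂ × ℂ).1 := by
    intro a b
    simp only [hF, hpI, Set.projIcc_val]
  -- continuity of slices
  have hslice1 : ∀ b : unitInterval, Continuous fun a : unitInterval => g ((a:ℝ), (b:ℝ)) := by
    intro b
    apply hgc.comp_continuous
    · exact continuous_subtype_val.prodMk continuous_const
    · exact fun a => hmemK a b
  have hslice2 : ∀ a : unitInterval, Continuous fun b : unitInterval => g ((a:ℝ), (b:ℝ)) := by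
    intro a
    apply hgc.comp_continuous
    · exact continuous_const.prodMk continuous_subtype_val
    · exact fun b => hmemK a b
  -- the winding difference
  set A : unitInterval → ℂ := fun s => g ((s:ℝ), ((1:unitInterval):ℝ)) - g ((s:ℝ), ((0:unitInterval):ℝ)) with hA
  have hAc : Continuous A := (hslice1 1).sub (hslice1 0)
  have hAexp : ∀ s, Complex.exp (A s) = 1 := by
    intro s
    rw [hA]
    simp only
    rw [Complex.exp_sub, hge _ (hmemK s 1), hge _ (hmemK s 0), hFst, hFst,
      H.source s, H.target s]
    norm_num
  have hAconst : A 0 = A 1 := const_of_exp_eq_one hAc hAexp 0 1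
  -- at s = 1 the loop is constant, so A 1 = 0
  have hC : ∀ t : unitInterval, Complex.exp (g (((1:unitInterval):ℝ), (t:ℝ))) = 1 := by
    intro t
    rw [hge _ (hmemK 1 t), hFst]
    have h1 : H ((1:unitInterval), t) = (⟨((1 : ℂ), (1 : ℂ)), h⟩ : D2) := by
      have := H.apply_one t
      simpa using this
    rw [h1]
  have hA1 : A 1 = 0 := by
    rw [hA]
    simp only
    rw [sub_eq_zero]
    exact const_of_exp_eq_one (hslice2 1) hC 1 0
  -- at s = 0 the loop is the unit circle, so A 0 = 2πI
  set B : unitInterval → ℂ :=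
    fun t => g (((0:unitInterval):ℝ), (t:ℝ)) - ((2 * Real.pi * (t : ℝ) : ℝ) : ℂ) * Complex.I with hB
  have hBc : Continuous B := by
    apply (hslice2 0).sub
    apply Continuous.mul _ continuous_const
    exact Complex.continuous_ofReal.comp (continuous_const.mul continuous_subtype_val)
  have hBexp : ∀ t, Complex.exp (B t) = 1 := by
    intro t
    rw [hB]
    simp only
    rw [Complex.exp_sub, hge _ (hmemK 0 t), hFst]
    have h0t : H ((0:unitInterval), t) = γ t := by
      have := H.apply_zero t
      simpa using this
    rw [h0t, hγ t]
    exact div_self (Complex.exp_ne_zero _)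
  have hBconst : B 0 = B 1 := const_of_exp_eq_one hBc hBexp 0 1
  have hA0 : A 0 = ((2 * Real.pi : ℝ) : ℂ) * Complex.I := by
    have hB0 : B 0 = g (((0:unitInterval):ℝ), ((0:unitInterval):ℝ)) := by
      rw [hB]; simp
    have hB1 : B 1 = g (((0:unitInterval):ℝ), ((1:unitInterval):ℝ))
        - ((2 * Real.pi : ℝ) : ℂ) * Complex.I := by
      rw [hB]; norm_num
    rw [hA]
    simp only
    rw [← sub_eq_zero]
    have := hBconst
    rw [hB0, hB1] at this
    rw [this]
    ring
  rw [hAconst, hA1] at hA0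
  have : ((2 * Real.pi : ℝ) : ℂ) = 0 ∨ Complex.I = 0 := mul_eq_zero.mp hA0.symm
  rcases this with h' | h'
  · rw [Complex.ofReal_eq_zero] at h'
    have := Real.pi_ne_zero
    nlinarith [Real.pi_pos]
  · exact Complex.I_ne_zero h'

end Stmt2Aux

end

/-- the loop `γ(θ) = (e^{iθ}, e^{−iθ})` lies in `D2` and is not
null-homotopic in `D2`; in particular `D2` is not simply connected. -/
theorem stmt_2 :
    (∀ θ : ℝ, ((Complex.exp (θ * Complex.I), Complex.exp (-θ * Complex.I)) : ℂ × ℂ) ∈ D2) ∧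
    (∀ h : (((1 : ℂ), (1 : ℂ)) : ℂ × ℂ) ∈ D2,
      ∀ γ : Path (⟨((1 : ℂ), (1 : ℂ)), h⟩ : D2) (⟨((1 : ℂ), (1 : ℂ)), h⟩ : D2),
        (∀ t : unitInterval, (γ t : ℂ × ℂ) =
          (Complex.exp (((2 * Real.pi * (t : ℝ) : ℝ) : ℂ) * Complex.I),
           Complex.exp (-((2 * Real.pi * (t : ℝ) : ℝ) : ℂ) * Complex.I))) →
        ¬ γ.Homotopic (Path.refl _)) ∧
    ¬ SimplyConnectedSpace D2 := by
  refine ⟨Stmt2Aux.mem_loop, fun h γ hγ => Stmt2Aux.part2 h γ hγ, ?_⟩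
  intro hsc
  have h : (((1 : ℂ), (1 : ℂ)) : ℂ × ℂ) ∈ D2 := by
    have := Stmt2Aux.mem_loop 0
    simpa using this
  have hcont : Continuous fun t : unitInterval =>
      ((Complex.exp (((2 * Real.pi * (t : ℝ) : ℝ) : ℂ) * Complex.I),
        Complex.exp (-((2 * Real.pi * (t : ℝ) : ℝ) : ℂ) * Complex.I)) : ℂ × ℂ) := by
    have hbase : Continuous fun t : unitInterval => (((2 * Real.pi * (t : ℝ) : ℝ) : ℂ)) :=
      Complex.continuous_ofReal.comp (continuous_const.mul continuous_subtype_val)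
    exact (Complex.continuous_exp.comp (hbase.mul continuous_const)).prodMk
      (Complex.continuous_exp.comp (hbase.neg.mul continuous_const))
  let γ₀ : Path (⟨((1 : ℂ), (1 : ℂ)), h⟩ : D2) (⟨((1 : ℂ), (1 : ℂ)), h⟩ : D2) :=
    { toFun := fun t => ⟨(Complex.exp (((2 * Real.pi * (t : ℝ) : ℝ) : ℂ) * Complex.I),
        Complex.exp (-((2 * Real.pi * (t : ℝ) : ℝ) : ℂ) * Complex.I)),
        Stmt2Aux.mem_loop (2 * Real.pi * (t : ℝ))⟩
      continuous_toFun := hcont.subtype_mk _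
      source' := by
        apply Subtype.ext
        norm_num
      target' := by
        apply Subtype.ext
        have h1 : ((2 * Real.pi * (((1:unitInterval)):ℝ) : ℝ) : ℂ) = 2 * (Real.pi : ℂ) := by
          push_cast
          norm_num
        simp only [h1, Prod.mk.injEq]
        constructor
        · exact Complex.exp_two_pi_mul_I
        · rw [neg_mul, Complex.exp_neg, Complex.exp_two_pi_mul_I, inv_one] }
  haveI := hsc
  exact Stmt2Aux.part2 h γ₀ (fun t => rfl)
    (SimplyConnectedSpace.paths_homotopic γ₀ (Path.refl _))
end

section
/- Let p₁,…,pₙ be holomorphic polynomials on ℂⁿ such that z ↦ (p₁(z),…,pₙ(z)) is a proper map, and let Γ = {z ∈ ℂⁿ : |p₁(z)| = ⋯ = |pₙ(z)| = 1}. Then the set K = {(z, w) ∈ ℂⁿ × ℂⁿ : wⱼ pⱼ(z) = 1 and |pⱼ(z)| = 1 for j = 1,…,n} is polynomially convex. -/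
/-- The polynomially convex hull of a subset of `ℂⁿ × ℂⁿ`, using polynomials in `2n`
variables. -/
def polyHull2 (n : ℕ) (K : Set ((Fin n → ℂ) × (Fin n → ℂ))) :
    Set ((Fin n → ℂ) × (Fin n → ℂ)) :=
  {zw | ∀ p : MvPolynomial (Fin n ⊕ Fin n) ℂ,
    ‖MvPolynomial.eval (Sum.elim zw.1 zw.2) p‖ ≤
      ⨆ x ∈ K, ‖MvPolynomial.eval (Sum.elim x.1 x.2) p‖}

/-- if `(p₁,…,pₙ)` is a proper polynomial map, the graph
`K = {(z,w) : wⱼ pⱼ(z) = 1, |pⱼ(z)| = 1}` over the distinguished boundary is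
polynomially convex. -/
theorem stmt_4 (n : ℕ) (p : Fin n → MvPolynomial (Fin n) ℂ)
    (hproper : IsProperMap (fun z : Fin n → ℂ => fun j => MvPolynomial.eval z (p j))) :
    polyHull2 n {zw | ∀ j, zw.2 j * MvPolynomial.eval zw.1 (p j) = 1 ∧
        ‖MvPolynomial.eval zw.1 (p j)‖ = 1}
      = {zw | ∀ j, zw.2 j * MvPolynomial.eval zw.1 (p j) = 1 ∧
        ‖MvPolynomial.eval zw.1 (p j)‖ = 1} := by
  set K : Set ((Fin n → ℂ) × (Fin n → ℂ)) :=
    {zw | ∀ j, zw.2 j * MvPolynomial.eval zw.1 (p j) = 1 ∧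
        ‖MvPolynomial.eval zw.1 (p j)‖ = 1} with hK
  apply Set.Subset.antisymm
  · -- hull ⊆ K
    intro zw hzw j
    have key : ∀ (q : MvPolynomial (Fin n ⊕ Fin n) ℂ) (c : ℝ), 0 ≤ c →
        (∀ x ∈ K, ‖MvPolynomial.eval (Sum.elim x.1 x.2) q‖ ≤ c) →
        ‖MvPolynomial.eval (Sum.elim zw.1 zw.2) q‖ ≤ c := by
      intro q c hc hbound
      refine (hzw q).trans ?_
      exact Real.iSup_le (fun x => Real.iSup_le (fun hx => hbound x hx) hc) hc
    -- Step 1: zw.2 j * P = 1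
    have h1 : zw.2 j * MvPolynomial.eval zw.1 (p j) = 1 := by
      have := key (MvPolynomial.X (Sum.inr j) *
          MvPolynomial.rename Sum.inl (p j) - 1) 0 le_rfl ?_
      · rw [norm_le_zero_iff] at this
        simpa [MvPolynomial.eval_rename, sub_eq_zero] using this
      · intro x hx
        have hxj := (hx j).1
        simp [MvPolynomial.eval_rename, sub_eq_zero, hxj]
    -- Step 2: ‖P‖ ≤ 1
    have h2 : ‖MvPolynomial.eval zw.1 (p j)‖ ≤ 1 := by
      have := key (MvPolynomial.rename Sum.inl (p j)) 1 zero_le_one ?_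
      · simpa [MvPolynomial.eval_rename] using this
      · intro x hx
        simp [MvPolynomial.eval_rename, (hx j).2]
    -- Step 3: ‖zw.2 j‖ ≤ 1
    have h3 : ‖zw.2 j‖ ≤ 1 := by
      have := key (MvPolynomial.X (Sum.inr j)) 1 zero_le_one ?_
      · simpa using this
      · intro x hx
        have h1x := (hx j).1
        have := congrArg norm h1x
        rw [norm_mul, (hx j).2, mul_one, norm_one] at this
        simp [this]
    have hnorm : ‖zw.2 j‖ * ‖MvPolynomial.eval zw.1 (p j)‖ = 1 := by
      have := congrArg norm h1
      rwa [norm_mul, norm_one] at this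
    constructor
    · exact h1
    · nlinarith [norm_nonneg (zw.2 j), norm_nonneg (MvPolynomial.eval zw.1 (p j))]
  · -- K ⊆ hull
    intro zw hzw q
    set F := fun z : Fin n → ℂ => fun j => MvPolynomial.eval z (p j) with hF
    have hT : IsCompact (Set.univ.pi fun _ : Fin n => Metric.sphere (0 : ℂ) 1) :=
      isCompact_univ_pi fun _ => isCompact_sphere 0 1
    have hΓ : IsCompact (F ⁻¹' (Set.univ.pi fun _ : Fin n => Metric.sphere (0 : ℂ) 1)) :=
      hproper.isCompact_preimage hT
    have hne : ∀ z ∈ F ⁻¹' (Set.univ.pi fun _ : Fin n => Metric.sphere (0 : ℂ) 1),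
        ∀ j, F z j ≠ 0 := by
      intro z hz j
      have hj := hz j (Set.mem_univ j)
      simp only [mem_sphere_iff_norm, sub_zero] at hj
      intro h0
      rw [h0] at hj
      simp at hj
    have hKeq : K = (fun z => (z, fun j => (F z j)⁻¹)) ''
        (F ⁻¹' (Set.univ.pi fun _ : Fin n => Metric.sphere (0 : ℂ) 1)) := by
      ext ⟨z, w⟩
      constructor
      · intro hm
        refine ⟨z, ?_, ?_⟩
        · intro j _
          simp only [mem_sphere_iff_norm, sub_zero]
          exact (hm j).2
        · have : w = fun j => (F z j)⁻¹ := by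
            funext j
            exact eq_inv_of_mul_eq_one_left (hm j).1
          simp [← this]
      · rintro ⟨z', hz', heq⟩
        obtain ⟨rfl, rfl⟩ := Prod.mk.injEq .. ▸ heq
        intro j
        have h0 := hne z' hz' j
        have hn : ‖F z' j‖ = 1 := by
          have := hz' j (Set.mem_univ j)
          simpa using this
        exact ⟨inv_mul_cancel₀ h0, hn⟩
    have hcont : ContinuousOn (fun z => (z, fun j => (F z j)⁻¹))
        (F ⁻¹' (Set.univ.pi fun _ : Fin n => Metric.sphere (0 : ℂ) 1)) := by
      refine continuousOn_id.prodMk (continuousOn_pi.2 fun j => ?_)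
      exact ((p j).continuous_eval.continuousOn).inv₀ fun z hz => hne z hz j
    have hKc : IsCompact K := hKeq ▸ hΓ.image_of_continuousOn hcont
    -- bound the evaluation of q on K
    have hqc : ContinuousOn (fun x : (Fin n → ℂ) × (Fin n → ℂ) =>
        MvPolynomial.eval (Sum.elim x.1 x.2) q) K := by
      apply Continuous.continuousOn
      have helim : Continuous fun x : (Fin n → ℂ) × (Fin n → ℂ) => Sum.elim x.1 x.2 := by
        refine continuous_pi fun i => ?_
        cases i with
        | inl a => exact (continuous_apply a).comp continuous_fst
        | inr a => exact (continuous_apply a).comp continuous_snd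
      exact q.continuous_eval.comp helim
    obtain ⟨C, hC⟩ := hKc.exists_bound_of_continuousOn hqc
    set M := max C 0 with hM
    have hbdd : BddAbove (Set.range fun x : (Fin n → ℂ) × (Fin n → ℂ) =>
        ⨆ _ : x ∈ K, ‖MvPolynomial.eval (Sum.elim x.1 x.2) q‖) := by
      refine ⟨M, ?_⟩
      rintro y ⟨x, rfl⟩
      exact Real.iSup_le (fun hx => (hC x hx).trans (le_max_left _ _)) (le_max_right _ _)
    calc ‖MvPolynomial.eval (Sum.elim zw.1 zw.2) q‖
        = ⨆ _ : zw ∈ K, ‖MvPolynomial.eval (Sum.elim zw.1 zw.2) q‖ := (ciSup_pos (f := fun _ => ‖MvPolynomial.eval (Sum.elim zw.1 zw.2) q‖) hzw).symm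
      _ ≤ ⨆ x ∈ K, ‖MvPolynomial.eval (Sum.elim x.1 x.2) q‖ := le_ciSup hbdd zw
end

section
/- Let Ω ⊆ ℂⁿ be a bounded domain defined by C¹ functions ψ₁,…,ψ_N : ℂⁿ → ℝ as Ω = {z : ψ₁(z) < 0, …, ψ_N(z) < 0}. Assume that for every multi-index J_k = {j₁ < ⋯ < j_k}, dψ_{j₁} ∧ ⋯ ∧ dψ_{j_k} ≠ 0 at every point of Σ_{J_k} = {ψ_{j₁} = ⋯ = ψ_{j_k} = 0}. Then Ω has the segment property. -/
open Module

lemma dual_surj {E : Type*} [AddCommGroup E] [Module ℝ E] {ι : Type*} [Fintype ι] [DecidableEq ι]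
    (f : ι → E →ₗ[ℝ] ℝ) (hf : LinearIndependent ℝ f) :
    Function.Surjective (LinearMap.pi f) := by
  rw [← LinearMap.range_eq_top]
  by_contra hn
  obtain ⟨φ, φne, hφ⟩ := Submodule.exists_dual_map_eq_bot_of_lt_top
    (lt_top_iff_ne_top.2 hn) inferInstance
  have hzero : ∀ v : E, φ (LinearMap.pi f v) = 0 := by
    intro v
    have : φ (LinearMap.pi f v) ∈ Submodule.map φ (LinearMap.range (LinearMap.pi f)) :=
      Submodule.mem_map_of_mem (LinearMap.mem_range_self _ v)
    rw [hφ] at this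
    simpa using this
  set c : ι → ℝ := fun j => φ ((Pi.single j 1 : ι → ℝ)) with hc
  have hrepr : ∀ v : E, ∑ j, c j • f j v = 0 := by
    intro v
    have := hzero v
    have hv : (LinearMap.pi f v) = ∑ j, (f j v) • ((Pi.single j 1 : ι → ℝ)) := by
      ext i
      simp [LinearMap.pi_apply, Finset.sum_apply, Pi.single_apply, mul_comm]
    rw [hv] at this
    rw [map_sum] at this
    simp only [map_smul] at this
    calc ∑ j, c j • f j v = ∑ j, (f j v) • φ ((Pi.single j 1 : ι → ℝ)) := by
          apply Finset.sum_congr rfl; intro j _; simp [hc, smul_eq_mul, mul_comm]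
      _ = 0 := this
  have hczero : ∀ j, c j = 0 := by
    have := Fintype.linearIndependent_iff.1 hf c ?_
    · exact this
    · ext v
      simpa using hrepr v
  apply φne
  apply LinearMap.ext
  intro v
  have : v = ∑ j, v j • ((Pi.single j 1 : ι → ℝ)) := by
    ext i; simp [Finset.sum_apply, Pi.single_apply, mul_comm]
  rw [this, map_sum]
  simp only [map_smul, smul_eq_mul]
  have : ∀ j, φ ((Pi.single j 1 : ι → ℝ)) = 0 := fun j => hczero j
  simp [this]

/-- A bounded domain `Ω` has the segment property if every boundary point has a
neighborhood `N` and a vector `V` such that `z + tV ∈ Ω` for every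
`z ∈ closure Ω ∩ N` and `0 < t < 1`. -/
def SegmentProperty {E : Type*} [NormedAddCommGroup E] [NormedSpace ℝ E]
    (Ω : Set E) : Prop :=
  ∀ ξ ∈ frontier Ω, ∃ N ∈ nhds ξ, ∃ V : E,
    ∀ z ∈ closure Ω ∩ N, ∀ t : ℝ, 0 < t → t < 1 → z + t • V ∈ Ω

/-- a bounded domain `{ψ₁ < 0, …, ψ_N < 0}` whose defining `C¹` functions
have linearly independent differentials on each face has the segment property. -/
theorem stmt_8 (n N : ℕ) (ψ : Fin N → (Fin n → ℂ) → ℝ)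
    (hsm : ∀ j, ContDiff ℝ 1 (ψ j))
    (Ω : Set (Fin n → ℂ)) (hΩ : Ω = {z | ∀ j, ψ j z < 0})
    (hbd : Bornology.IsBounded Ω) (hconn : IsConnected Ω)
    (hnd : ∀ J : Finset (Fin N), J.Nonempty → ∀ z : Fin n → ℂ,
      (∀ j ∈ J, ψ j z = 0) →
      LinearIndependent ℝ (fun j : J => fderiv ℝ (ψ (j : Fin N)) z)) :
    SegmentProperty Ω := by
  classical
  intro ξ hξ
  -- Ω is open
  have hopen : IsOpen Ω := by
    rw [hΩ]
    have : {z : Fin n → ℂ | ∀ j, ψ j z < 0} = ⋂ j, ψ j ⁻¹' Set.Iio 0 := by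
      ext z; simp [Set.mem_iInter]
    rw [this]
    exact isOpen_iInter_of_finite fun j => isOpen_Iio.preimage (hsm j).continuous
  have hξcl : ξ ∈ closure Ω := hξ.1
  have hξnot : ξ ∉ Ω := fun h => hξ.2 (by rwa [hopen.interior_eq])
  -- ψ j ≤ 0 on closure Ω
  have hle : ∀ w ∈ closure Ω, ∀ j, ψ j w ≤ 0 := by
    intro w hw j
    have hsub : Ω ⊆ {z : Fin n → ℂ | ψ j z ≤ 0} := by
      rw [hΩ]; intro z hz; exact le_of_lt (hz j)
    have : closure Ω ⊆ {z : Fin n → ℂ | ψ j z ≤ 0} :=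
      closure_minimal hsub (isClosed_le (hsm j).continuous continuous_const)
    exact this hw
  -- the active index set
  set J : Finset (Fin N) := Finset.univ.filter (fun j => ψ j ξ = 0) with hJdef
  have hJmem : ∀ j, j ∈ J ↔ ψ j ξ = 0 := by
    intro j; simp [hJdef]
  have hJne : J.Nonempty := by
    simp only [hΩ, Set.mem_setOf_eq, not_forall, not_lt] at hξnot
    obtain ⟨j, hj⟩ := hξnot
    exact ⟨j, (hJmem j).2 (le_antisymm (hle ξ hξcl j) hj)⟩
  have hJzero : ∀ j ∈ J, ψ j ξ = 0 := fun j hj => (hJmem j).1 hj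
  -- find V with fderiv ψ j ξ V = -1 for j ∈ J
  have hli := (hnd J hJne ξ hJzero).map' (ContinuousLinearMap.coeLM ℝ)
      (LinearMap.ker_eq_bot_of_injective ContinuousLinearMap.coe_injective)
  obtain ⟨V, hV⟩ := dual_surj _ hli (fun _ => (-1 : ℝ))
  have hVval : ∀ j ∈ J, fderiv ℝ (ψ j) ξ V = -1 := by
    intro j hj
    have := congrFun hV ⟨j, hj⟩
    exact this
  -- good open neighborhoods for each index
  have key : ∀ j : Fin N, ∃ U : Set (Fin n → ℂ), IsOpen U ∧ ξ ∈ U ∧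
      ∀ w ∈ U, (j ∈ J → fderiv ℝ (ψ j) w V < -(1/2)) ∧ (j ∉ J → ψ j w < 0) := by
    intro j
    by_cases hj : j ∈ J
    · refine ⟨(fun w => fderiv ℝ (ψ j) w V) ⁻¹' Set.Iio (-(1/2)), ?_, ?_, ?_⟩
      · exact isOpen_Iio.preimage (((hsm j).continuous_fderiv one_ne_zero).clm_apply
          continuous_const)
      · show fderiv ℝ (ψ j) ξ V < -(1/2)
        rw [hVval j hj]; norm_num
      · intro w hw
        exact ⟨fun _ => hw, fun h => absurd hj h⟩
    · refine ⟨ψ j ⁻¹' Set.Iio 0, isOpen_Iio.preimage (hsm j).continuous, ?_, ?_⟩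
      · show ψ j ξ < 0
        rcases lt_or_eq_of_le (hle ξ hξcl j) with h | h
        · exact h
        · exact absurd ((hJmem j).2 h) hj
      · intro w hw
        exact ⟨fun h => absurd h hj, fun _ => hw⟩
  choose U hUopen hUmem hUprop using key
  -- intersect and find a ball
  have hUopen' : IsOpen (⋂ j, U j) := isOpen_iInter_of_finite hUopen
  have hξU : ξ ∈ ⋂ j, U j := Set.mem_iInter.2 hUmem
  obtain ⟨δ, hδpos, hball⟩ := Metric.isOpen_iff.1 hUopen' ξ hξU
  -- scale V
  set ε : ℝ := δ / (2 * (‖V‖ + 1)) with hε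
  have hVnorm : (0:ℝ) < ‖V‖ + 1 := by positivity
  have hεpos : 0 < ε := by positivity
  set V' : Fin n → ℂ := ε • V with hV'
  refine ⟨Metric.ball ξ (δ/2), Metric.ball_mem_nhds ξ (by positivity), V', ?_⟩
  rintro z ⟨hzcl, hzball⟩ t ht0 ht1
  -- points on the segment stay in the ball of radius δ
  have hseg : ∀ s : ℝ, 0 ≤ s → s ≤ 1 → z + s • V' ∈ Metric.ball ξ δ := by
    intro s hs0 hs1
    rw [Metric.mem_ball] at hzball ⊢
    calc dist (z + s • V') ξ ≤ dist (z + s • V') z + dist z ξ := dist_triangle _ _ _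
      _ = ‖s • V'‖ + dist z ξ := by rw [dist_eq_norm]; simp
      _ < ‖s • V'‖ + δ/2 := by linarith
      _ ≤ δ/2 + δ/2 := by
          have : ‖s • V'‖ = s * (ε * ‖V‖) := by
            rw [hV', norm_smul, norm_smul, Real.norm_eq_abs, Real.norm_eq_abs,
              abs_of_nonneg hs0, abs_of_nonneg hεpos.le]
          rw [this]
          have h1 : ε * ‖V‖ ≤ δ/2 := by
            rw [hε, div_mul_eq_mul_div, mul_comm 2 (‖V‖+1)]
            rw [div_le_div_iff₀ (by positivity) (by norm_num)]
            have : ‖V‖ ≤ ‖V‖ + 1 := by linarith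
            nlinarith [norm_nonneg V]
          nlinarith
      _ = δ := by ring
  rw [hΩ]
  intro j
  by_cases hj : j ∈ J
  · -- active constraint: use the mean value argument
    have hψz : ψ j z ≤ 0 := hle z hzcl j
    set g : ℝ → ℝ := fun s => ψ j (z + s • V') with hg
    have hderiv : ∀ s : ℝ, HasDerivAt g (fderiv ℝ (ψ j) (z + s • V') V') s := by
      intro s
      have hc : HasDerivAt (fun s : ℝ => z + s • V') V' s := by
        have := ((hasDerivAt_id s).smul_const V').const_add z
        simpa using this
      have hf : HasFDerivAt (ψ j) (fderiv ℝ (ψ j) (z + s • V')) (z + s • V') :=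
        (((hsm j).differentiable one_ne_zero) (z + s • V')).hasFDerivAt
      exact hf.comp_hasDerivAt s hc
    have hanti : StrictAntiOn g (Set.Icc 0 1) := by
      apply strictAntiOn_of_deriv_neg (convex_Icc 0 1)
      · exact Continuous.continuousOn ((hsm j).continuous.comp
          (continuous_const.add (continuous_id.smul continuous_const)))
      · intro s hs
        rw [interior_Icc] at hs
        rw [(hderiv s).deriv]
        have hmem : z + s • V' ∈ Metric.ball ξ δ := hseg s hs.1.le hs.2.le
        have hU : z + s • V' ∈ U j := Set.mem_iInter.1 (hball hmem) j
        have hlt : fderiv ℝ (ψ j) (z + s • V') V < -(1/2) := (hUprop j _ hU).1 hj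
        have : fderiv ℝ (ψ j) (z + s • V') V' = ε * fderiv ℝ (ψ j) (z + s • V') V := by
          rw [hV', map_smul, smul_eq_mul]
        rw [this]
        nlinarith
    have h0 : g t < g 0 :=
      hanti (Set.mem_Icc.2 ⟨le_refl 0, zero_le_one⟩)
        (Set.mem_Icc.2 ⟨ht0.le, ht1.le⟩) ht0
    have hg0 : g 0 = ψ j z := by simp [hg]
    show ψ j (z + t • V') < 0
    calc ψ j (z + t • V') = g t := rfl
      _ < g 0 := h0
      _ = ψ j z := hg0
      _ ≤ 0 := hψz
  · -- inactive constraint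
    have hmem : z + t • V' ∈ Metric.ball ξ δ := hseg t ht0.le ht1.le
    have hU : z + t • V' ∈ U j := Set.mem_iInter.1 (hball hmem) j
    exact (hUprop j _ hU).2 hj
end
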